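/- Let r(x) = 1 + a₁x + a₂x² + a₃x³ + ⋯ be a formal power series over ℤ with a₁ = 1 or a₁ = -1. Then there do not exist such coefficients satisfying the congruence r(t+z)·r(t) ≡ P(t,z)·r(z) in the ring ℤ[[t,z]]/(2z, z³), where P(t,z) = 1 + a₁²·t(t+z) + a₂²·t²(t+z)² + a₃²·t³(t+z)³ + ⋯ . -/

import Mathlib

open MvPowerSeries Finsupp

noncomputable section

/-- The monomial exponent of `t^j * z^k`, where `t = X 0` and `z = X 1`. -/
def ex (j k : ℕ) : Fin 2 →₀ ℕ := Finsupp.single 0 j + Finsupp.single 1 k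

/-- The series `r(t+z) = ∑ i, a i * (t+z)^i ∈ ℤ[[t,z]]`, expanded by the binomial
theorem: the coefficient of `t^j z^k` is `C(j+k, k) * a (j+k)`. -/
def rtz (a : ℕ → ℤ) : MvPowerSeries (Fin 2) ℤ :=
  fun e => ((e 0 + e 1).choose (e 1) : ℤ) * a (e 0 + e 1)

/-- The series `r(t) = ∑ i, a i * t^i`, viewed in `ℤ[[t,z]]`. -/
def rt (a : ℕ → ℤ) : MvPowerSeries (Fin 2) ℤ :=
  fun e => if e 1 = 0 then a (e 0) else 0

/-- The series `r(z) = ∑ i, a i * z^i`, viewed in `ℤ[[t,z]]`. -/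
def rz (a : ℕ → ℤ) : MvPowerSeries (Fin 2) ℤ :=
  fun e => if e 0 = 0 then a (e 1) else 0

/-- The series `P(t,z) = ∑ i, (a i)^2 * t^i * (t+z)^i ∈ ℤ[[t,z]]` (for `a 0 = 1` this is
`1 + ∑_{i ≥ 1} (a i)^2 t^i (t+z)^i`): the coefficient of `t^p z^q` is `C(i, q) * (a i)^2`
when `p + q = 2i` and `q ≤ i`, and `0` otherwise. -/
def Pser (a : ℕ → ℤ) : MvPowerSeries (Fin 2) ℤ :=
  fun e =>
    if e 1 ≤ e 0 ∧ (e 0 + e 1) % 2 = 0 then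
      ((((e 0 + e 1) / 2).choose (e 1)) : ℤ) * (a ((e 0 + e 1) / 2)) ^ 2
    else 0

/-! Since `(2z, z³) ⊆ (z)`, the congruence already holds modulo `z`, where it reads
`r(t)² = P(t, 0) r(0)` with `P(t, 0) = ∑ aᵢ² t²ⁱ` even in `t`. Comparing coefficients of `t`
gives `2 a₀ a₁ = 0`, impossible for `a₀ = 1`, `a₁ = ±1`. -/

namespace MvPowerSeries

variable {σ R : Type*} [CommRing R]

theorem coeff_single_one_mul [DecidableEq σ] (i : σ) (f g : MvPowerSeries σ R) :
    coeff (single i 1) (f * g) =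
      constantCoeff f * coeff (single i 1) g + coeff (single i 1) f * constantCoeff g := by
  rw [coeff_mul, antidiagonal_single, Finset.sum_map,
    show Finset.HasAntidiagonal.antidiagonal 1 = {(0, 1), (1, 0)} from rfl]
  simp

theorem coeff_eq_of_X_dvd_sub {s : σ} {f g : MvPowerSeries σ R} (h : X s ∣ f - g)
    {e : σ →₀ ℕ} (he : e s = 0) : coeff e f = coeff e g :=
  sub_eq_zero.mp (by simpa using X_dvd_iff.mp h e he)

theorem span_mul_X_X_pow_le_span_X (s : σ) (c : MvPowerSeries σ R) {n : ℕ} (hn : n ≠ 0) :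
    Ideal.span {c * X s, X s ^ n} ≤ Ideal.span {X s} := by
  rw [Ideal.span_le, Set.insert_subset_iff, Set.singleton_subset_iff]
  exact ⟨Ideal.mul_mem_left _ _ (Ideal.mem_span_singleton_self _),
    Ideal.pow_mem_of_mem _ (Ideal.mem_span_singleton_self _) n (Nat.pos_of_ne_zero hn)⟩

end MvPowerSeries

theorem coeff_single_zero_one_rtz_mul_rt (a : ℕ → ℤ) :
    coeff (single 0 1) (rtz a * rt a) = 2 * a 0 * a 1 := by
  rw [coeff_single_one_mul]
  simp [rtz, rt, coeff_apply, ← coeff_zero_eq_constantCoeff_apply]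
  ring

theorem coeff_single_zero_one_Pser_mul_rz (a : ℕ → ℤ) :
    coeff (single 0 1) (Pser a * rz a) = 0 := by
  rw [coeff_single_one_mul]
  simp [Pser, rz, coeff_apply, ← coeff_zero_eq_constantCoeff_apply]

/-- There are no integer coefficients `a` with `a 0 = 1` and `a 1 = ±1` such that
`r(t+z) * r(t) = P(t,z) * r(z)` holds in `ℤ[[t,z]] / (2z, z³)`. -/
theorem stmt0 :
    ¬ ∃ a : ℕ → ℤ, a 0 = 1 ∧ (a 1 = 1 ∨ a 1 = -1) ∧
      Ideal.Quotient.mk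
          (Ideal.span {2 * (X 1 : MvPowerSeries (Fin 2) ℤ), (X 1) ^ 3})
          (rtz a * rt a) =
        Ideal.Quotient.mk
          (Ideal.span {2 * (X 1 : MvPowerSeries (Fin 2) ℤ), (X 1) ^ 3})
          (Pser a * rz a) := by
  rintro ⟨a, h0, h1, heq⟩
  have hdvd : X 1 ∣ rtz a * rt a - Pser a * rz a :=
    Ideal.mem_span_singleton.mp
      (span_mul_X_X_pow_le_span_X 1 2 three_ne_zero (Ideal.Quotient.eq.mp heq))
  have hcoeff := coeff_eq_of_X_dvd_sub hdvd (e := single 0 1) (by simp)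
  rw [coeff_single_zero_one_rtz_mul_rt, coeff_single_zero_one_Pser_mul_rz, h0] at hcoeff
  omega

end
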